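/- arXiv:1712.02930 — 5 statements merged into one kernel-verified Lean document; each statement's English description precedes it below -/
import Mathlib

section
/- If Θ : ℝ → 𝔤 is a smooth curve in a Lie algebra 𝔤 with bi-invariant inner product satisfying the normal sub-Riemannian cubic equation Θ'' = [Θ', V], and x : ℝ → G satisfies x' = x·V with x(0) = e, then Θ'(t) = Ad(x(t)⁻¹) A for a constant A ∈ 𝔤; in particular Θ' is isospectral (‖Θ'(t)‖ is constant). -/
open Filter Topology

/-- If `y` is a pointwise two-sided inverse of a differentiable curve `x` into a normed
algebra, then `y` is differentiable with the expected derivative `-(y x' y)`. -/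
lemma hasDerivAt_pointwise_inverse
    {A : Type*} [NormedRing A] [NormedAlgebra ℝ A]
    (x y : ℝ → A) (hinv : ∀ t, x t * y t = 1 ∧ y t * x t = 1)
    {x' : A} {t : ℝ} (hx : HasDerivAt x x' t) :
    HasDerivAt y (-(y t * x' * y t)) t := by
  have key : ∀ s, y s - y t = y s * (x t - x s) * y t := by
    intro s
    have h1 : x t * y t = 1 := (hinv t).1
    have hys : y s * x s = 1 := (hinv s).2
    rw [mul_sub, sub_mul, mul_assoc, h1, mul_one, hys, one_mul]
  -- continuity of y at t
  set C := ‖y t‖ with hCdef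
  have hC : 0 ≤ C := norm_nonneg _
  have hδpos : (0 : ℝ) < (2 * (C + 1))⁻¹ := by positivity
  have h0 : Tendsto (fun s => ‖x t - x s‖) (𝓝 t) (𝓝 0) := by
    have hc : Tendsto x (𝓝 t) (𝓝 (x t)) := hx.continuousAt
    have h' : Tendsto (fun s => x t - x s) (𝓝 t) (𝓝 (x t - x t)) :=
      tendsto_const_nhds.sub hc
    rw [sub_self] at h'
    simpa using h'.norm
  have hev : ∀ᶠ s in 𝓝 t, ‖x t - x s‖ ≤ (2 * (C + 1))⁻¹ :=
    (h0.eventually_lt_const hδpos).mono fun s hs => hs.le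
  have hbound : ∀ᶠ s in 𝓝 t, ‖y s - y t‖ ≤ 2 * C * C * ‖x t - x s‖ := by
    filter_upwards [hev] with s hs
    have h1 : ‖y s - y t‖ ≤ ‖y s‖ * ‖x t - x s‖ * C := by
      calc ‖y s - y t‖ = ‖y s * (x t - x s) * y t‖ := by rw [key s]
        _ ≤ ‖y s * (x t - x s)‖ * C := norm_mul_le _ _
        _ ≤ ‖y s‖ * ‖x t - x s‖ * C :=
            mul_le_mul_of_nonneg_right (norm_mul_le _ _) hC
    have h2 : ‖y s‖ ≤ C + ‖y s - y t‖ := by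
      calc ‖y s‖ = ‖y t + (y s - y t)‖ := by rw [add_sub_cancel]
        _ ≤ C + ‖y s - y t‖ := norm_add_le _ _
    have hhalf : ‖x t - x s‖ * C ≤ 1 / 2 := by
      have h3 : (2 * (C + 1))⁻¹ * C ≤ 1 / 2 := by
        rw [inv_mul_le_iff₀ (by positivity : (0 : ℝ) < 2 * (C + 1))]
        nlinarith
      nlinarith [norm_nonneg (x t - x s)]
    have hd0 : 0 ≤ ‖y s - y t‖ := norm_nonneg _
    have hn0 : 0 ≤ ‖x t - x s‖ := norm_nonneg _
    have hA : ‖y s‖ * (‖x t - x s‖ * C) ≤ (C + ‖y s - y t‖) * (‖x t - x s‖ * C) :=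
      mul_le_mul_of_nonneg_right h2 (mul_nonneg hn0 hC)
    have hB : (C + ‖y s - y t‖) * (‖x t - x s‖ * C) ≤ (C + ‖y s - y t‖) * (1 / 2) :=
      mul_le_mul_of_nonneg_left hhalf (by linarith)
    have hdC : ‖y s - y t‖ ≤ C := by nlinarith [hA, hB, h1]
    calc ‖y s - y t‖ ≤ ‖y s‖ * ‖x t - x s‖ * C := h1
      _ ≤ (C + C) * ‖x t - x s‖ * C := by
          have : ‖y s‖ ≤ C + C := by linarith
          exact mul_le_mul_of_nonneg_right
            (mul_le_mul_of_nonneg_right this hn0) hC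
      _ = 2 * C * C * ‖x t - x s‖ := by ring
  have hgz : Tendsto (fun s => 2 * C * C * ‖x t - x s‖) (𝓝 t) (𝓝 0) := by
    have := h0.const_mul (2 * C * C)
    simpa using this
  have hsub : Tendsto (fun s => y s - y t) (𝓝 t) (𝓝 0) :=
    squeeze_zero_norm' hbound hgz
  have hyc : Tendsto y (𝓝 t) (𝓝 (y t)) := by
    have := hsub.add_const (y t)
    simpa using this
  -- slope computation
  rw [hasDerivAt_iff_tendsto_slope]
  have hslope : ∀ s, slope y t s = -(y s * slope x t s * y t) := by
    intro s
    rcases eq_or_ne s t with rfl | hs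
    · simp [slope_same]
    · rw [slope_def_module, slope_def_module, key s, mul_smul_comm, smul_mul_assoc,
        ← smul_neg]
      congr 1
      noncomm_ring
  have hsx : Tendsto (slope x t) (𝓝[≠] t) (𝓝 x') := hasDerivAt_iff_tendsto_slope.mp hx
  have hyc' : Tendsto y (𝓝[≠] t) (𝓝 (y t)) := hyc.mono_left nhdsWithin_le_nhds
  have hmain : Tendsto (fun s => -(y s * slope x t s * y t)) (𝓝[≠] t)
      (𝓝 (-(y t * x' * y t))) :=
    (((hyc'.mul hsx).mul tendsto_const_nhds).neg)
  exact hmain.congr fun s => (hslope s).symm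

/-- If `Θ : ℝ → 𝔤` satisfies the normal sub-Riemannian cubic equation
`Θ'' = [Θ', V]` and `x : ℝ → G` satisfies `x' = x·V`, `x 0 = 1`, then
`Θ'(t) = Ad(x(t)⁻¹) A = x(t)⁻¹ A x(t)` for a constant `A`, and `‖Θ'(t)‖` is constant
(the norm being bi-invariant). We work in a normed ℝ-algebra, the group elements being
the invertible elements, with commutator bracket. -/
theorem statement0
    {A : Type*} [NormedRing A] [NormedAlgebra ℝ A]
    (x y V Θ : ℝ → A)
    (hx : ∀ t, HasDerivAt x (x t * V t) t)
    (hx0 : x 0 = 1)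
    (hinv : ∀ t, x t * y t = 1 ∧ y t * x t = 1)
    (hV : ContDiff ℝ (⊤ : ℕ∞) V)
    (hΘ : ContDiff ℝ (⊤ : ℕ∞) Θ)
    (hbi : ∀ g gi z : A, g * gi = 1 → gi * g = 1 → ‖gi * z * g‖ = ‖z‖)
    (hcubic : ∀ t, iteratedDeriv 2 Θ t =
      (deriv Θ t) * V t - V t * (deriv Θ t)) :
    ∃ A₀ : A, (∀ t, deriv Θ t = y t * A₀ * x t) ∧
      ∀ t, ‖deriv Θ t‖ = ‖deriv Θ 0‖ := by
  have hTi : ContDiff ℝ (⊤ : ℕ∞) Θ := hΘ.of_le (by simp)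
  have hΘ1 : ContDiff ℝ (⊤ : ℕ∞) (deriv Θ) := (contDiff_infty_iff_deriv.mp hTi).2
  have hΘ1d : Differentiable ℝ (deriv Θ) := (contDiff_infty_iff_deriv.mp hΘ1).1
  have hΘ'' : ∀ t, HasDerivAt (deriv Θ) (deriv Θ t * V t - V t * deriv Θ t) t := by
    intro t
    have h := (hΘ1d t).hasDerivAt
    have h2 : deriv (deriv Θ) t = deriv Θ t * V t - V t * deriv Θ t := by
      rw [← hcubic t, iteratedDeriv_succ, iteratedDeriv_one]
    rwa [h2] at h
  have hy' : ∀ t, HasDerivAt y (-(y t * (x t * V t) * y t)) t := fun t =>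
    hasDerivAt_pointwise_inverse x y hinv (hx t)
  have hF' : ∀ t, HasDerivAt (fun s => x s * deriv Θ s * y s) 0 t := by
    intro t
    have h := ((hx t).mul (hΘ'' t)).mul (hy' t)
    obtain ⟨h1, h2⟩ := hinv t
    have h3 : y t * (x t * V t) * y t = V t * y t := by
      rw [← mul_assoc, h2, one_mul]
    rw [h3] at h
    convert h using 1
    show (0:A) = (x t * V t * deriv Θ t + x t * (deriv Θ t * V t - V t * deriv Θ t)) * y t + x t * deriv Θ t * -(V t * y t)
    noncomm_ring
    rfl
  have hFd : Differentiable ℝ (fun s => x s * deriv Θ s * y s) := fun t =>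
    (hF' t).differentiableAt
  have hconst : ∀ t, x t * deriv Θ t * y t = x 0 * deriv Θ 0 * y 0 :=
    fun t => is_const_of_deriv_eq_zero hFd (fun s => (hF' s).deriv) t 0
  have hy0 : y 0 = 1 := by
    have := (hinv 0).1
    rwa [hx0, one_mul] at this
  have hF0 : x 0 * deriv Θ 0 * y 0 = deriv Θ 0 := by rw [hx0, hy0, one_mul, mul_one]
  have hmain : ∀ t, deriv Θ t = y t * deriv Θ 0 * x t := by
    intro t
    obtain ⟨h1, h2⟩ := hinv t
    have ht : x t * deriv Θ t * y t = deriv Θ 0 := (hconst t).trans hF0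
    calc deriv Θ t = (y t * x t) * deriv Θ t * (y t * x t) := by
          rw [h2, one_mul, mul_one]
      _ = y t * (x t * deriv Θ t * y t) * x t := by noncomm_ring
      _ = y t * deriv Θ 0 * x t := by rw [ht]
  refine ⟨deriv Θ 0, hmain, fun t => ?_⟩
  rw [hmain t, hbi (x t) (y t) (deriv Θ 0) (hinv t).1 (hinv t).2]
end

section
/- Let V : ℝ → δ₁ and φ : ℝ → δ₁^⊥ be smooth, where Θ = V' + φ (identifying proj_{δ₁}Θ = V') satisfies Θ'' = [Θ', V]. Then the quantity ⟨V'', V⟩ − (1/2)⟨V', V'⟩ is constant in time. -/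
open RealInnerProductSpace

lemma aux_smooth_iter {G : Type*} [NormedAddCommGroup G] [NormedSpace ℝ G]
    (f : ℝ → G) (n : ℕ) (h : ContDiff ℝ (⊤:ℕ∞) f) :
    ContDiff ℝ (⊤:ℕ∞) (iteratedDeriv n f) := by
  rw [iteratedDeriv_eq_iterate]; exact h.iterate_deriv n

lemma aux_hasDerivAt {G : Type*} [NormedAddCommGroup G] [NormedSpace ℝ G]
    (f : ℝ → G) (n : ℕ) (h : ContDiff ℝ (⊤:ℕ∞) f) (t : ℝ) :
    HasDerivAt (iteratedDeriv n f) (iteratedDeriv (n+1) f t) t := by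
  rw [iteratedDeriv_succ]
  exact (((aux_smooth_iter f n h).differentiable (by simp)) t).hasDerivAt

lemma aux_perp_deriv {G : Type*} [NormedAddCommGroup G] [InnerProductSpace ℝ G]
    (f : ℝ → G) (v : G) (h : ContDiff ℝ (⊤:ℕ∞) f) (h0 : ∀ t, ⟪v, f t⟫ = 0) :
    ∀ t, ⟪v, deriv f t⟫ = 0 := by
  intro t
  have hf : HasDerivAt f (deriv f t) t :=
    ((h.differentiable (by simp)) t).hasDerivAt
  have h1 : HasDerivAt (fun s => ⟪v, f s⟫) (⟪v, deriv f t⟫ + ⟪(0:G), f t⟫) t :=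
    (hasDerivAt_const t v).inner ℝ hf
  have h2 : HasDerivAt (fun s => ⟪v, f s⟫) 0 t := by
    have : (fun s : ℝ => ⟪v, f s⟫) = fun _ => (0:ℝ) := funext h0
    rw [this]; exact hasDerivAt_const t 0
  have := h2.unique h1
  simpa [inner_zero_left] using this.symm

lemma aux_neg_self {G : Type*} [NormedAddCommGroup G] [NormedSpace ℝ G]
    (a : G) (h : a = -a) : a = 0 := by
  have : (2:ℝ) • a = 0 := by rw [two_smul]; nth_rewrite 2 [h]; simp
  simpa using (smul_eq_zero.mp this).resolve_left (by norm_num)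

/-- For a normal sub-Riemannian cubic with `Θ = V' + φ`, `V ∈ δ₁`,
`φ ∈ δ₁ᗮ`, satisfying `V''' + φ'' = [V'' + φ', V]` for an invariant bracket,
the quantity `⟨V'', V⟩ − (1/2)⟨V', V'⟩` is constant in time. -/
theorem statement1
    {G : Type*} [NormedAddCommGroup G] [InnerProductSpace ℝ G]
    (B : G →ₗ[ℝ] G →ₗ[ℝ] G)
    (hskew : ∀ X Y, B X Y = - B Y X)
    (hinv : ∀ X Y Z : G, ⟪B X Y, Z⟫ = ⟪X, B Y Z⟫)
    (δ₁ : Submodule ℝ G)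
    (V φ : ℝ → G)
    (hV : ContDiff ℝ (⊤ : ℕ∞) V) (hφ : ContDiff ℝ (⊤ : ℕ∞) φ)
    (hVmem : ∀ t, V t ∈ δ₁) (hφmem : ∀ t, φ t ∈ δ₁ᗮ)
    (heq : ∀ t, iteratedDeriv 3 V t + iteratedDeriv 2 φ t
        = B (iteratedDeriv 2 V t + deriv φ t) (V t)) :
    ∀ t : ℝ, ⟪iteratedDeriv 2 V t, V t⟫ - (1/2) * ⟪deriv V t, deriv V t⟫
      = ⟪iteratedDeriv 2 V 0, V 0⟫ - (1/2) * ⟪deriv V 0, deriv V 0⟫ := by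
  have hV' : ContDiff ℝ (⊤:ℕ∞) V := hV.of_le (by simp)
  have hφ' : ContDiff ℝ (⊤:ℕ∞) φ := hφ.of_le (by simp)
  have hBzero : ∀ Y : G, B Y Y = 0 := fun Y => aux_neg_self _ (hskew Y Y)
  set F : ℝ → ℝ := fun t =>
    ⟪iteratedDeriv 2 V t, V t⟫ - (1/2) * ⟪deriv V t, deriv V t⟫ with hF
  -- ⟪iteratedDeriv 2 φ t, V t⟫ = 0
  have hφperp : ∀ t, ⟪iteratedDeriv 2 φ t, V t⟫ = 0 := by
    intro t
    have h0 : ∀ s, ⟪V t, φ s⟫ = 0 := fun s =>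
      (Submodule.mem_orthogonal _ _).mp (hφmem s) (V t) (hVmem t)
    have h1 : ∀ s, ⟪V t, deriv φ s⟫ = 0 := aux_perp_deriv φ (V t) hφ' h0
    have hdφ : ContDiff ℝ (⊤:ℕ∞) (deriv φ) := by
      have := aux_smooth_iter φ 1 hφ'; rwa [iteratedDeriv_one] at this
    have h2 : ∀ s, ⟪V t, deriv (deriv φ) s⟫ = 0 := aux_perp_deriv _ (V t) hdφ h1
    have : iteratedDeriv 2 φ = deriv (deriv φ) := by
      rw [iteratedDeriv_succ, iteratedDeriv_one]
    rw [this, real_inner_comm]; exact h2 t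
  -- derivative of F is zero
  have hderiv : ∀ t, HasDerivAt F 0 t := by
    intro t
    have hD0 : HasDerivAt V (deriv V t) t :=
      ((hV'.differentiable (by simp)) t).hasDerivAt
    have hD1 : HasDerivAt (deriv V) (iteratedDeriv 2 V t) t := by
      have := aux_hasDerivAt V 1 hV' t; rwa [iteratedDeriv_one] at this
    have hD2 : HasDerivAt (iteratedDeriv 2 V) (iteratedDeriv 3 V t) t :=
      aux_hasDerivAt V 2 hV' t
    have h1 : HasDerivAt (fun s => ⟪iteratedDeriv 2 V s, V s⟫)
        (⟪iteratedDeriv 2 V t, deriv V t⟫ + ⟪iteratedDeriv 3 V t, V t⟫) t :=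
      hD2.inner ℝ hD0
    have h2 : HasDerivAt (fun s => (1/2 : ℝ) * ⟪deriv V s, deriv V s⟫)
        ((1/2) * (⟪deriv V t, iteratedDeriv 2 V t⟫
          + ⟪iteratedDeriv 2 V t, deriv V t⟫)) t :=
      (hD1.inner ℝ hD1).const_mul (1/2)
    have h3 := h1.sub h2
    -- the derivative equals ⟪V''' t, V t⟫
    have hval : ⟪iteratedDeriv 2 V t, deriv V t⟫ + ⟪iteratedDeriv 3 V t, V t⟫
        - (1/2) * (⟪deriv V t, iteratedDeriv 2 V t⟫
          + ⟪iteratedDeriv 2 V t, deriv V t⟫) = ⟪iteratedDeriv 3 V t, V t⟫ := by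
      rw [real_inner_comm (deriv V t) (iteratedDeriv 2 V t)]; ring
    have hzero : ⟪iteratedDeriv 3 V t, V t⟫ = 0 := by
      have hD3 : iteratedDeriv 3 V t
          = B (iteratedDeriv 2 V t + deriv φ t) (V t) - iteratedDeriv 2 φ t :=
        eq_sub_of_add_eq (heq t)
      rw [hD3, inner_sub_left, hφperp t, hinv, hBzero, inner_zero_right]
      ring
    rw [hval, hzero] at h3
    exact h3
  intro t
  exact is_const_of_deriv_eq_zero (fun y => (hderiv y).differentiableAt)
    (fun y => (hderiv y).deriv) t 0
end

section
/- Under the normal sub-Riemannian cubic equation Θ'' = [Θ', V] with Θ = V' + φ, V ∈ δ₁, φ ∈ δ₁^⊥, the quantity ⟨V'', V''⟩ + ⟨φ', φ'⟩ is constant; consequently ‖V''(t)‖² ≤ c₂ and ‖φ'(t)‖² ≤ c₂ for all t, where c₂ = ⟨V''(0), V''(0)⟩ + ⟨φ'(0), φ'(0)⟩. -/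
open RealInnerProductSpace

lemma deriv_inner_zero' {G : Type*} [NormedAddCommGroup G] [InnerProductSpace ℝ G]
    {f : ℝ → G} (hf : Differentiable ℝ f) {w : G}
    (h : ∀ t, ⟪f t, w⟫ = 0) (t : ℝ) : ⟪deriv f t, w⟫ = 0 := by
  have h1 : HasDerivAt (fun s => ⟪f s, w⟫) (⟪f t, (0:G)⟫ + ⟪deriv f t, w⟫) t :=
    (hf t).hasDerivAt.inner ℝ (hasDerivAt_const t w)
  have hfun : (fun s => (⟪f s, w⟫ : ℝ)) = fun _ => 0 := funext h
  have := h1.deriv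
  rw [hfun, deriv_const] at this
  simpa using this.symm

/-- Under the normal sub-Riemannian cubic equation, the quantity
`⟨V'', V''⟩ + ⟨φ', φ'⟩` is constant; consequently `‖V''(t)‖² ≤ c₂` and
`‖φ'(t)‖² ≤ c₂` where `c₂ = ⟨V''(0), V''(0)⟩ + ⟨φ'(0), φ'(0)⟩`. -/
theorem statement2
    {G : Type*} [NormedAddCommGroup G] [InnerProductSpace ℝ G]
    (B : G →ₗ[ℝ] G →ₗ[ℝ] G)
    (hskew : ∀ X Y, B X Y = - B Y X)
    (hinv : ∀ X Y Z : G, ⟪B X Y, Z⟫ = ⟪X, B Y Z⟫)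
    (δ₁ : Submodule ℝ G)
    (V φ : ℝ → G)
    (hV : ContDiff ℝ (⊤ : ℕ∞) V) (hφ : ContDiff ℝ (⊤ : ℕ∞) φ)
    (hVmem : ∀ t, V t ∈ δ₁) (hφmem : ∀ t, φ t ∈ δ₁ᗮ)
    (heq : ∀ t, iteratedDeriv 3 V t + iteratedDeriv 2 φ t
        = B (iteratedDeriv 2 V t + deriv φ t) (V t))
    (c₂ : ℝ)
    (hc₂ : c₂ = ⟪iteratedDeriv 2 V 0, iteratedDeriv 2 V 0⟫ + ⟪deriv φ 0, deriv φ 0⟫) :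
    (∀ t : ℝ, ⟪iteratedDeriv 2 V t, iteratedDeriv 2 V t⟫ + ⟪deriv φ t, deriv φ t⟫ = c₂)
    ∧ (∀ t : ℝ, ‖iteratedDeriv 2 V t‖ ^ 2 ≤ c₂)
    ∧ (∀ t : ℝ, ‖deriv φ t‖ ^ 2 ≤ c₂) := by
  have hVn : ∀ n : ℕ, ContDiff ℝ (⊤ : ℕ∞) (iteratedDeriv n V) := by
    intro n; rw [iteratedDeriv_eq_iterate]
    exact ContDiff.iterate_deriv n (hV.of_le (by simp))
  have hφn : ∀ n : ℕ, ContDiff ℝ (⊤ : ℕ∞) (iteratedDeriv n φ) := by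
    intro n; rw [iteratedDeriv_eq_iterate]
    exact ContDiff.iterate_deriv n (hφ.of_le (by simp))
  have hVd : ∀ n : ℕ, Differentiable ℝ (iteratedDeriv n V) :=
    fun n => (hVn n).differentiable (by simp)
  have hφd : ∀ n : ℕ, Differentiable ℝ (iteratedDeriv n φ) :=
    fun n => (hφn n).differentiable (by simp)
  -- iterated derivatives of V annihilate δ₁ᗮ
  have hVperp : ∀ n : ℕ, ∀ t : ℝ, ∀ w ∈ δ₁ᗮ, ⟪iteratedDeriv n V t, w⟫ = 0 := by
    intro n
    induction n with
    | zero =>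
        intro t w hw
        simpa [iteratedDeriv_zero] using
          (Submodule.mem_orthogonal δ₁ w).mp hw (V t) (hVmem t)
    | succ n ih =>
        intro t w hw
        rw [iteratedDeriv_succ]
        exact deriv_inner_zero' (hVd n) (fun s => ih s w hw) t
  -- iterated derivatives of φ lie in δ₁ᗮ
  have hφperp : ∀ n : ℕ, ∀ t : ℝ, iteratedDeriv n φ t ∈ δ₁ᗮ := by
    intro n
    induction n with
    | zero => intro t; simpa [iteratedDeriv_zero] using hφmem t
    | succ n ih =>
        intro t
        rw [Submodule.mem_orthogonal, iteratedDeriv_succ]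
        intro u hu
        rw [real_inner_comm]
        refine deriv_inner_zero' (hφd n) (fun s => ?_) t
        rw [real_inner_comm]
        exact (Submodule.mem_orthogonal δ₁ _).mp (ih s) u hu
  -- the energy function
  set E : ℝ → ℝ := fun t =>
    ⟪iteratedDeriv 2 V t, iteratedDeriv 2 V t⟫ + ⟪deriv φ t, deriv φ t⟫ with hE
  have hEderiv : ∀ t : ℝ, HasDerivAt E 0 t := by
    intro t
    have e3 : iteratedDeriv 3 V = deriv (iteratedDeriv 2 V) := by
      rw [show (3 : ℕ) = 2 + 1 from rfl]; exact iteratedDeriv_succ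
    have e2φ : iteratedDeriv 2 φ = deriv (deriv φ) := by
      rw [show (2 : ℕ) = 1 + 1 from rfl]
      rw [iteratedDeriv_succ, iteratedDeriv_one]
    have hdφ : Differentiable ℝ (deriv φ) := by
      have := hφd 1; rwa [iteratedDeriv_one] at this
    have h2V : HasDerivAt (iteratedDeriv 2 V) (iteratedDeriv 3 V t) t := by
      rw [e3]; exact ((hVd 2) t).hasDerivAt
    have h1φ : HasDerivAt (deriv φ) (iteratedDeriv 2 φ t) t := by
      rw [e2φ]; exact (hdφ t).hasDerivAt
    have key := (h2V.inner ℝ h2V).add (h1φ.inner ℝ h1φ)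
    have hval :
        (⟪iteratedDeriv 2 V t, iteratedDeriv 3 V t⟫ + ⟪iteratedDeriv 3 V t, iteratedDeriv 2 V t⟫)
        + (⟪deriv φ t, iteratedDeriv 2 φ t⟫ + ⟪iteratedDeriv 2 φ t, deriv φ t⟫) = 0 := by
      set X := iteratedDeriv 2 V t + deriv φ t with hX
      have hBzero : ⟪B X (V t), X⟫ = 0 := by
        have h1 : ⟪B X (V t), X⟫ = ⟪X, B (V t) X⟫ := hinv X (V t) X
        rw [hskew (V t) X, inner_neg_right] at h1
        have h2 : ⟪X, B X (V t)⟫ = ⟪B X (V t), X⟫ := real_inner_comm _ _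
        linarith
      have hsum : ⟪iteratedDeriv 3 V t + iteratedDeriv 2 φ t, X⟫ = 0 := by
        rw [heq t]; exact hBzero
      have c1 : ⟪iteratedDeriv 3 V t, deriv φ t⟫ = 0 := by
        have := hφperp 1 t; rw [iteratedDeriv_one] at this
        exact hVperp 3 t _ this
      have c2 : ⟪iteratedDeriv 2 V t, iteratedDeriv 2 φ t⟫ = 0 :=
        hVperp 2 t _ (hφperp 2 t)
      have expand : ⟪iteratedDeriv 3 V t + iteratedDeriv 2 φ t, X⟫
          = ⟪iteratedDeriv 3 V t, iteratedDeriv 2 V t⟫ + ⟪iteratedDeriv 2 φ t, deriv φ t⟫ := by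
        rw [hX, inner_add_left, inner_add_right, inner_add_right, c1]
        have hcomm : ⟪iteratedDeriv 2 φ t, iteratedDeriv 2 V t⟫
            = ⟪iteratedDeriv 2 V t, iteratedDeriv 2 φ t⟫ := real_inner_comm _ _
        linarith
      rw [expand] at hsum
      have s1 : ⟪iteratedDeriv 2 V t, iteratedDeriv 3 V t⟫
          = ⟪iteratedDeriv 3 V t, iteratedDeriv 2 V t⟫ := real_inner_comm _ _
      have s2 : ⟪deriv φ t, iteratedDeriv 2 φ t⟫
          = ⟪iteratedDeriv 2 φ t, deriv φ t⟫ := real_inner_comm _ _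
      linarith
    rw [← hval]
    exact key
  have hEdiff : Differentiable ℝ E := fun t => (hEderiv t).differentiableAt
  have hEconst : ∀ t : ℝ, E t = c₂ := by
    intro t
    have := is_const_of_deriv_eq_zero hEdiff (fun x => (hEderiv x).deriv) t 0
    rw [this, hE, hc₂]
  refine ⟨hEconst, fun t => ?_, fun t => ?_⟩
  · have := hEconst t
    have h1 : ⟪iteratedDeriv 2 V t, iteratedDeriv 2 V t⟫ = ‖iteratedDeriv 2 V t‖ ^ 2 :=
      real_inner_self_eq_norm_sq _
    have h2 : (0:ℝ) ≤ ⟪deriv φ t, deriv φ t⟫ := real_inner_self_nonneg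
    simp only [hE] at this
    linarith
  · have := hEconst t
    have h1 : ⟪deriv φ t, deriv φ t⟫ = ‖deriv φ t‖ ^ 2 := real_inner_self_eq_norm_sq _
    have h2 : (0:ℝ) ≤ ⟪iteratedDeriv 2 V t, iteratedDeriv 2 V t⟫ := real_inner_self_nonneg
    simp only [hE] at this
    linarith
end

section
/- If V : ℝ → 𝔤 satisfies V'' = [V', V] + C with C = 0, x' = xV, x(0) = e, and W := −Ad(x)V, then W'' = 0, hence W(t) = W₀ + W₁ t for constants W₀, W₁ ∈ 𝔤. -/
open Filter Topology

/-- Auxiliary: a pointwise two-sided inverse of a differentiable path is differentiable,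
with derivative `-y x' y = -(V y)` when `x' = x V`. -/
theorem statement9_aux_inv_deriv {A : Type*} [NormedRing A] [NormedAlgebra ℝ A]
    (x y V : ℝ → A)
    (hx : ∀ t, HasDerivAt x (x t * V t) t)
    (hinv : ∀ t, x t * y t = 1 ∧ y t * x t = 1) :
    ∀ t, HasDerivAt y (-(V t * y t)) t := by
  have key : ∀ s t, y s - y t = y s * (x t - x s) * y t := by
    intro s t
    have h1 := (hinv t).1
    have h2 := (hinv s).2
    calc y s - y t = y s * (x t * y t) - (y s * x s) * y t := by
          rw [h1, h2, mul_one, one_mul]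
      _ = y s * (x t - x s) * y t := by noncomm_ring
  have hycont : ∀ t, Tendsto y (𝓝 t) (𝓝 (y t)) := by
    intro t
    set M := ‖y t‖ with hM
    have hxc : Tendsto (fun s => ‖x t - x s‖) (𝓝 t) (𝓝 0) := by
      have h := ((hx t).continuousAt.tendsto).const_sub (x t)
      simpa using h.norm
    have hev : ∀ᶠ s in 𝓝 t, ‖x t - x s‖ * M ≤ 1/2 := by
      have h := hxc.mul_const M
      rw [zero_mul] at h
      exact h.eventually_le_const (by norm_num)
    have hbound : ∀ᶠ s in 𝓝 t, ‖y s - y t‖ ≤ 2 * (M * M) * ‖x t - x s‖ := by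
      filter_upwards [hev] with s hs
      have h1 : ‖y s - y t‖ ≤ ‖y s‖ * ‖x t - x s‖ * M := by
        rw [key s t]
        calc ‖y s * (x t - x s) * y t‖ ≤ ‖y s * (x t - x s)‖ * ‖y t‖ := norm_mul_le _ _
          _ ≤ ‖y s‖ * ‖x t - x s‖ * M := by
              exact mul_le_mul_of_nonneg_right (norm_mul_le _ _) (norm_nonneg _)
      have h2 : ‖y s‖ ≤ ‖y s - y t‖ + M := by
        calc ‖y s‖ = ‖(y s - y t) + y t‖ := by rw [sub_add_cancel]
          _ ≤ ‖y s - y t‖ + M := norm_add_le _ _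
      have hc : (0:ℝ) ≤ ‖x t - x s‖ := norm_nonneg _
      have hg : (0:ℝ) ≤ ‖y s - y t‖ := norm_nonneg _
      have hM0 : (0:ℝ) ≤ M := norm_nonneg _
      nlinarith [mul_le_mul_of_nonneg_right h2 (mul_nonneg hc hM0),
        mul_le_mul_of_nonneg_left hs hg]
    have h0 : Tendsto (fun s => 2 * (M * M) * ‖x t - x s‖) (𝓝 t) (𝓝 0) := by
      have := hxc.const_mul (2 * (M * M))
      simpa using this
    have := squeeze_zero_norm' hbound h0
    have h2 : Tendsto (fun s => y s - y t) (𝓝 t) (𝓝 0) := this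
    have := h2.add (tendsto_const_nhds (x := y t))
    simpa using this
  intro t
  rw [hasDerivAt_iff_tendsto_slope]
  have hxs : Tendsto (slope x t) (𝓝[≠] t) (𝓝 (x t * V t)) :=
    hasDerivAt_iff_tendsto_slope.mp (hx t)
  have hys : Tendsto y (𝓝[≠] t) (𝓝 (y t)) := (hycont t).mono_left nhdsWithin_le_nhds
  have hlim : Tendsto (fun s => y s * (-(slope x t s)) * y t) (𝓝[≠] t)
      (𝓝 (y t * (-(x t * V t)) * y t)) :=
    (hys.mul hxs.neg).mul tendsto_const_nhds
  have heq : ∀ᶠ s in 𝓝[≠] t, y s * (-(slope x t s)) * y t = slope y t s := by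
    filter_upwards [self_mem_nhdsWithin] with s hs
    have hst : s - t ≠ 0 := sub_ne_zero.mpr hs
    simp only [slope, vsub_eq_sub]
    rw [key s t]
    rw [← smul_neg, neg_sub, mul_smul_comm, smul_mul_assoc]
  have := hlim.congr' heq
  have hval : y t * (-(x t * V t)) * y t = -(V t * y t) := by
    rw [mul_neg, neg_mul, neg_inj, ← mul_assoc, (hinv t).2, one_mul]
  rwa [hval] at this

/-- If `V : ℝ → 𝔤` satisfies the null Riemannian Lie quadratic equation
`V'' = [V', V]`, `x' = xV`, `x(0) = e`, and `W := −Ad(x)V = −x V x⁻¹`, then `W'' = 0`,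
hence `W(t) = W₀ + t W₁` for constants `W₀, W₁`. -/
theorem statement9
    {A : Type*} [NormedRing A] [NormedAlgebra ℝ A]
    (x y V W : ℝ → A)
    (hV : ContDiff ℝ (⊤ : ℕ∞) V)
    (hx : ∀ t, HasDerivAt x (x t * V t) t)
    (hx0 : x 0 = 1)
    (hinv : ∀ t, x t * y t = 1 ∧ y t * x t = 1)
    (hquad : ∀ t, iteratedDeriv 2 V t = deriv V t * V t - V t * deriv V t)
    (hW : ∀ t, W t = -(x t * V t * y t)) :
    (∀ t, iteratedDeriv 2 W t = 0)
    ∧ ∃ W₀ W₁ : A, ∀ t : ℝ, W t = W₀ + t • W₁ := by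
  have hy : ∀ t, HasDerivAt y (-(V t * y t)) t := statement9_aux_inv_deriv x y V hx hinv
  have hVdiff : Differentiable ℝ V := hV.differentiable (by simp)
  have hVc : ContDiff ℝ (⊤ : ℕ∞) (deriv V) :=
    (contDiff_infty_iff_deriv.mp (hV.of_le (by simp))).2
  have hV'diff : Differentiable ℝ (deriv V) := hVc.differentiable (by simp)
  have hiter : ∀ t, deriv (deriv V) t = deriv V t * V t - V t * deriv V t := by
    intro t
    rw [← hquad t, iteratedDeriv_succ, iteratedDeriv_one]
  -- first derivative of W
  have hW' : ∀ t, HasDerivAt W (-(x t * deriv V t * y t)) t := by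
    intro t
    have h2 := (((hx t).mul (hVdiff t).hasDerivAt).mul (hy t)).neg
    have h3 : HasDerivAt (fun t => -(x t * V t * y t)) (-(x t * deriv V t * y t)) t := by
      refine h2.congr_deriv ?_
      simp only [Pi.mul_apply]
      noncomm_ring
    exact h3.congr_of_eventuallyEq (Filter.Eventually.of_forall fun s => hW s)
  -- the first derivative has derivative 0
  have hW'' : ∀ t, HasDerivAt (fun s => -(x s * deriv V s * y s)) 0 t := by
    intro t
    have h2 := (((hx t).mul (hV'diff t).hasDerivAt).mul (hy t)).neg
    refine h2.congr_deriv ?_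
    simp only [Pi.mul_apply]
    rw [hiter t]
    noncomm_ring
  have hderivW : deriv W = fun t => -(x t * deriv V t * y t) :=
    funext fun t => (hW' t).deriv
  constructor
  · intro t
    rw [iteratedDeriv_succ, iteratedDeriv_one, hderivW]
    exact (hW'' t).deriv
  · -- linearity
    set D : ℝ → A := fun t => -(x t * deriv V t * y t) with hD
    have hDconst : ∀ t, D t = D 0 :=
      fun t => is_const_of_deriv_eq_zero (fun s => (hW'' s).differentiableAt)
        (fun s => (hW'' s).deriv) t 0
    refine ⟨W 0, D 0, fun t => ?_⟩
    have hg : ∀ s, HasDerivAt (fun u => W u - u • D 0) 0 s := by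
      intro s
      have h1 : HasDerivAt (fun u : ℝ => u • D 0) (D 0) s := by
        simpa using (hasDerivAt_id s).smul_const (D 0)
      have := (hW' s).sub h1
      rw [show -(x s * deriv V s * y s) = D s from rfl, hDconst s, sub_self] at this
      exact this
    have hconst : W t - t • D 0 = W 0 - (0:ℝ) • D 0 :=
      is_const_of_deriv_eq_zero (fun s => (hg s).differentiableAt)
        (fun s => (hg s).deriv) t 0
    rw [zero_smul, sub_zero] at hconst
    linear_combination (norm := abel) hconst
end

section
/- If q, θ : ℝ → ℝ are smooth with q > 0 and satisfy q''' − 3q'θ'² − 3qθ''θ' = 0, then the quantity −(1/2)q'² + q''q − (3/2)q²θ'² is constant in time. -/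
private lemma hasDerivAt_iteratedDeriv {f : ℝ → ℝ} (hf : ContDiff ℝ (⊤ : ℕ∞) f) (n : ℕ) (t : ℝ) :
    HasDerivAt (iteratedDeriv n f) (iteratedDeriv (n + 1) f t) t := by
  have h : DifferentiableAt ℝ (iteratedDeriv n f) t :=
    hf.differentiable_iteratedDeriv n (by exact_mod_cast ENat.coe_lt_top n) t
  simpa [iteratedDeriv_succ] using h.hasDerivAt

/-- If smooth `q, θ : ℝ → ℝ` with `q > 0` satisfy
`q''' − 3q'θ'² − 3qθ''θ' = 0`, then `−(1/2)q'² + q''q − (3/2)q²θ'²` is constant. -/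
theorem statement12
    (q θ : ℝ → ℝ) (hq : ContDiff ℝ (⊤ : ℕ∞) q) (hθ : ContDiff ℝ (⊤ : ℕ∞) θ)
    (hqpos : ∀ t, 0 < q t)
    (heq : ∀ t, iteratedDeriv 3 q t - 3 * deriv q t * (deriv θ t) ^ 2
      - 3 * q t * iteratedDeriv 2 θ t * deriv θ t = 0) :
    ∀ t : ℝ,
      -(1/2) * (deriv q t) ^ 2 + iteratedDeriv 2 q t * q t
          - (3/2) * (q t) ^ 2 * (deriv θ t) ^ 2
        = -(1/2) * (deriv q 0) ^ 2 + iteratedDeriv 2 q 0 * q 0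
          - (3/2) * (q 0) ^ 2 * (deriv θ 0) ^ 2 := by
  set F : ℝ → ℝ := fun t => -(1/2) * (deriv q t) ^ 2 + iteratedDeriv 2 q t * q t
      - (3/2) * (q t) ^ 2 * (deriv θ t) ^ 2 with hF
  have key : ∀ t, HasDerivAt F 0 t := by
    intro t
    have h0 : HasDerivAt q (deriv q t) t := by
      simpa using hasDerivAt_iteratedDeriv hq 0 t
    have h1 : HasDerivAt (deriv q) (iteratedDeriv 2 q t) t := by
      simpa [iteratedDeriv_one] using hasDerivAt_iteratedDeriv hq 1 t
    have h2 : HasDerivAt (iteratedDeriv 2 q) (iteratedDeriv 3 q t) t :=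
      hasDerivAt_iteratedDeriv hq 2 t
    have hθ1 : HasDerivAt (deriv θ) (iteratedDeriv 2 θ t) t := by
      simpa [iteratedDeriv_one] using hasDerivAt_iteratedDeriv hθ 1 t
    have hD := (((h1.pow 2).const_mul (-(1/2:ℝ))).add (h2.mul h0)).sub
      (((h0.pow 2).mul (hθ1.pow 2)).const_mul (3/2:ℝ))
    convert hD using 1
    · rfl
    · rfl
    · funext x; simp only [hF, Pi.add_apply, Pi.sub_apply, Pi.mul_apply, Pi.pow_apply]; ring
    · push_cast [Pi.pow_apply]
      linear_combination (-(q t)) * heq t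
  intro t
  have hc : F t = F 0 :=
    is_const_of_deriv_eq_zero (fun x => (key x).differentiableAt)
      (fun x => (key x).deriv) t 0
  simpa [hF] using hc
end
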